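/- arXiv:2002.11480 — 10 statements merged into one kernel-verified Lean document; each statement's English description precedes it below -/
import Mathlib

section
/- Let C be a category with finite products and x, u, y, v objects of C. The map sending a pair (get : x ⟶ y, put : x ⨯ v ⟶ u) to the class ⟨prod.lift (𝟙 x) get, put | x⟩ is a bijection from the set (x ⟶ y) × (x ⨯ v ⟶ u) to Lens((x,u),(y,v)). Its inverse is well defined on the quotient and sends the class ⟨α, β | c⟩ to the pair (α ≫ prod.snd, prod.lift (prod.fst ≫ α ≫ prod.fst) prod.snd ≫ β). -/
open CategoryTheory CategoryTheory.Limits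

variable {C : Type*} [Category C] [HasFiniteProducts C]

/-- Representatives of cartesian lenses from `(x,u)` to `(y,v)`. -/
def LensRep (x u y v : C) : Type _ :=
  Σ c : C, (x ⟶ c ⨯ y) × (c ⨯ v ⟶ u)

/-- The coend relation: for `f : n ⟶ c`, `α : x ⟶ n ⨯ y`, `β : c ⨯ v ⟶ u`,
`(c, α ≫ prod.map f (𝟙 y), β)` is related to `(n, α, prod.map f (𝟙 v) ≫ β)`. -/
def LensRel (x u y v : C) : LensRep x u y v → LensRep x u y v → Prop :=
  fun A B => ∃ f : B.1 ⟶ A.1,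
    A.2.1 = B.2.1 ≫ prod.map f (𝟙 y) ∧ B.2.2 = prod.map f (𝟙 v) ≫ A.2.2

/-- The lens coend `Lens((x,u),(y,v))`. -/
def Lens (x u y v : C) : Type _ := Quot (LensRel x u y v)

/-!
A lens `⟨α, β | c⟩` is determined by its view `α ≫ prod.snd` and by `β` pulled back along the
residue `α ≫ prod.fst : x ⟶ c`. Indeed `α` factors as `prod.lift (𝟙 x) (α ≫ prod.snd)` followed
by `prod.map (α ≫ prod.fst) (𝟙 y)`, so the coend relation with `f := α ≫ prod.fst` moves every
representative to one with residue object `x`, where it is a plain pair `(get, put)`.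
-/

theorem prod_lift_fst_comp_snd {D : Type*} [Category D] {a b w : D} [HasBinaryProduct a w]
    [HasBinaryProduct b w] (h : a ⟶ b) :
    prod.lift (prod.fst ≫ h) (prod.snd : a ⨯ w ⟶ w) = prod.map h (𝟙 w) := by
  simpa using prod.lift_fst_comp_snd_comp h (𝟙 w)

theorem prod_lift_id_comp_map_fst {D : Type*} [Category D] {a b w : D} [HasBinaryProduct a w]
    [HasBinaryProduct b w] (α : a ⟶ b ⨯ w) :
    prod.lift (𝟙 a) (α ≫ prod.snd) ≫ prod.map (α ≫ prod.fst) (𝟙 w) = α := by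
  ext <;> simp [prod.lift_fst, prod.lift_snd]

namespace LensRep

variable {x u y v : C}

noncomputable def getPut (A : LensRep x u y v) : (x ⟶ y) × (x ⨯ v ⟶ u) :=
  (A.2.1 ≫ prod.snd, prod.map (A.2.1 ≫ prod.fst) (𝟙 v) ≫ A.2.2)

noncomputable def ofGetPut (p : (x ⟶ y) × (x ⨯ v ⟶ u)) : LensRep x u y v :=
  ⟨x, prod.lift (𝟙 x) p.1, p.2⟩

theorem getPut_eq_of_lensRel {A B : LensRep x u y v} (h : LensRel x u y v A B) :
    A.getPut = B.getPut := by
  obtain ⟨f, hα, hβ⟩ := h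
  simp [getPut, hα, hβ]

theorem getPut_ofGetPut (p : (x ⟶ y) × (x ⨯ v ⟶ u)) : (ofGetPut p).getPut = p := by
  simp [getPut, ofGetPut, prod.lift_fst, prod.lift_snd]

theorem lensRel_ofGetPut_getPut (A : LensRep x u y v) :
    LensRel x u y v A (ofGetPut A.getPut) :=
  ⟨A.2.1 ≫ prod.fst, (prod_lift_id_comp_map_fst A.2.1).symm, rfl⟩

end LensRep

noncomputable def Lens.getPut {x u y v : C} : Lens x u y v → (x ⟶ y) × (x ⨯ v ⟶ u) :=
  Quot.lift LensRep.getPut fun _ _ => LensRep.getPut_eq_of_lensRel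

/-- The map `(get, put) ↦ ⟨prod.lift (𝟙 x) get, put | x⟩` is a bijection from
`(x ⟶ y) × (x ⨯ v ⟶ u)` to `Lens((x,u),(y,v))`, whose inverse is well defined on the
quotient and sends `⟨α, β | c⟩` to
`(α ≫ prod.snd, prod.lift (prod.fst ≫ α ≫ prod.fst) prod.snd ≫ β)`. -/
theorem lens_get_put_bijection (x u y v : C) :
    ∃ g : Lens x u y v → (x ⟶ y) × (x ⨯ v ⟶ u),
      (∀ (c : C) (α : x ⟶ c ⨯ y) (β : c ⨯ v ⟶ u),
        g (Quot.mk (LensRel x u y v) ⟨c, α, β⟩) =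
          (α ≫ prod.snd, prod.lift (prod.fst ≫ α ≫ prod.fst) prod.snd ≫ β)) ∧
      Function.LeftInverse g
        (fun p : (x ⟶ y) × (x ⨯ v ⟶ u) =>
          Quot.mk (LensRel x u y v) ⟨x, prod.lift (𝟙 x) p.1, p.2⟩) ∧
      Function.RightInverse g
        (fun p : (x ⟶ y) × (x ⨯ v ⟶ u) =>
          Quot.mk (LensRel x u y v) ⟨x, prod.lift (𝟙 x) p.1, p.2⟩) := by
  refine ⟨Lens.getPut, fun c α β => ?_, LensRep.getPut_ofGetPut, ?_⟩
  · simp only [Lens.getPut, LensRep.getPut, prod_lift_fst_comp_snd]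
  · rintro ⟨A⟩
    exact (Quot.sound (LensRep.lensRel_ofGetPut_getPut A)).symm
end

section
/- Let C be a category with finite products and x, u, y, v objects of C. For every object c and morphisms α : x ⟶ c ⨯ y, β : c ⨯ v ⟶ u, one has the equality of classes ⟨α, β | c⟩ = ⟨prod.lift (𝟙 x) (α ≫ prod.snd), prod.map (α ≫ prod.fst) (𝟙 v) ≫ β | x⟩ in Lens((x,u),(y,v)); that is, every cartesian lens can be expressed in get/put normal form with get := α ≫ prod.snd and put := prod.map (α ≫ prod.fst) (𝟙 v) ≫ β. -/
open CategoryTheory CategoryTheory.Limits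

variable {C : Type*} [Category C] [HasFiniteProducts C]

theorem Lens.mk_slide {x u y v n c : C} (f : n ⟶ c) (α : x ⟶ n ⨯ y) (β : c ⨯ v ⟶ u) :
    Quot.mk (LensRel x u y v) ⟨c, α ≫ prod.map f (𝟙 y), β⟩ =
      Quot.mk (LensRel x u y v) ⟨n, α, prod.map f (𝟙 v) ≫ β⟩ :=
  Quot.sound ⟨f, rfl, rfl⟩

theorem prod.lift_id_snd_comp_map_fst {x c y : C} (α : x ⟶ c ⨯ y) :
    prod.lift (𝟙 x) (α ≫ prod.snd) ≫ prod.map (α ≫ prod.fst) (𝟙 y) = α := by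
  rw [prod.lift_map, Category.id_comp, Category.comp_id, ← prod.comp_lift, prod.lift_fst_snd,
    Category.comp_id]

/-- Every cartesian lens `⟨α, β | c⟩` equals its get/put normal form
`⟨prod.lift (𝟙 x) get, put | x⟩` with `get := α ≫ prod.snd` and
`put := prod.map (α ≫ prod.fst) (𝟙 v) ≫ β`. -/
theorem lens_normal_form (x u y v : C) (c : C) (α : x ⟶ c ⨯ y) (β : c ⨯ v ⟶ u) :
    Quot.mk (LensRel x u y v) ⟨c, α, β⟩ =
      Quot.mk (LensRel x u y v)
        ⟨x, prod.lift (𝟙 x) (α ≫ prod.snd), prod.map (α ≫ prod.fst) (𝟙 v) ≫ β⟩ := by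
  conv_lhs => rw [← prod.lift_id_snd_comp_map_fst α]
  exact Lens.mk_slide _ _ _
end

section
/- Let C be a monoidal category, acting on itself by the tensor product (its canonical actegory structure), and let x, y be objects of C. The map sending f : x ⟶ y to the class ⟨f ≫ (λ_y).inv, (λ_{𝟙}).hom | 𝟙⟩ is a bijection from the hom-set (x ⟶ y) to Optic((x, 𝟙),(y, 𝟙)); its inverse is well defined on the quotient and sends ⟨α, β | m⟩ (with α : x ⟶ m ⊗ y and β : m ⊗ 𝟙 ⟶ 𝟙) to α ≫ (((ρ_m).inv ≫ β) ⊗ 𝟙 y) ≫ (λ_y).hom. In particular the functor R embedding morphisms of C as optics with trivial backward part is fully faithful. -/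
/-! With both backward objects trivial, the backward part `β : m ⊗ 𝟙 ⟶ 𝟙` of an optic is, up to
`ρ_ m`, a morphism `f : m ⟶ 𝟙`. The coend relation along `f` identifies `⟨α, β | m⟩` with an optic
whose residual is `𝟙`, and such an optic is a morphism `x ⟶ y` up to the unitors. -/

open CategoryTheory MonoidalCategory

variable {C : Type*} [Category C] [MonoidalCategory C]

/-- Representatives of optics (for the canonical self-action of a monoidal category). -/
def OpticRep (x u y v : C) : Type _ :=
  Σ m : C, (x ⟶ m ⊗ y) × (m ⊗ v ⟶ u)

/-- The coend relation: for `f : n ⟶ m`, `α : x ⟶ n ⊗ y`, `β : m ⊗ v ⟶ u`,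
`(m, α ≫ (f ⊗ 𝟙 y), β)` is related to `(n, α, (f ⊗ 𝟙 v) ≫ β)`. -/
def OpticRel (x u y v : C) : OpticRep x u y v → OpticRep x u y v → Prop :=
  fun A B => ∃ f : B.1 ⟶ A.1,
    A.2.1 = B.2.1 ≫ (f ⊗ₘ 𝟙 y) ∧ B.2.2 = (f ⊗ₘ 𝟙 v) ≫ A.2.2

/-- The optic coend `Optic((x,u),(y,v))`. -/
def Optic (x u y v : C) : Type _ := Quot (OpticRel x u y v)

namespace OpticRep

variable {x y : C}

def toHom (A : OpticRep x (𝟙_ C) y (𝟙_ C)) : x ⟶ y :=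
  A.2.1 ≫ (((ρ_ A.1).inv ≫ A.2.2) ⊗ₘ 𝟙 y) ≫ (λ_ y).hom

theorem toHom_eq_of_rel {A B : OpticRep x (𝟙_ C) y (𝟙_ C)}
    (h : OpticRel x (𝟙_ C) y (𝟙_ C) A B) : A.toHom = B.toHom := by
  obtain ⟨m, α, β⟩ := A
  obtain ⟨n, α', β'⟩ := B
  obtain ⟨f, hα, hβ⟩ := h
  dsimp only at f hα hβ
  have hρ : (ρ_ n).inv ≫ f ▷ 𝟙_ C = f ≫ (ρ_ m).inv := (rightUnitor_inv_naturality f).symm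
  simp only [toHom, hα, hβ, tensorHom_id, Category.assoc, ← comp_whiskerRight_assoc,
    reassoc_of% hρ]

theorem rel_toHom (A : OpticRep x (𝟙_ C) y (𝟙_ C)) :
    OpticRel x (𝟙_ C) y (𝟙_ C) ⟨𝟙_ C, A.toHom ≫ (λ_ y).inv, (λ_ (𝟙_ C)).hom⟩ A := by
  obtain ⟨m, α, β⟩ := A
  refine ⟨(ρ_ m).inv ≫ β, ?_, ?_⟩
  · simp [toHom]
  · simp [unitors_equal]

end OpticRep

namespace Optic

variable {x y : C}

def toHom : Optic x (𝟙_ C) y (𝟙_ C) → (x ⟶ y) :=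
  Quot.lift OpticRep.toHom fun _ _ => OpticRep.toHom_eq_of_rel

def ofHom (f : x ⟶ y) : Optic x (𝟙_ C) y (𝟙_ C) :=
  Quot.mk _ ⟨𝟙_ C, f ≫ (λ_ y).inv, (λ_ (𝟙_ C)).hom⟩

theorem toHom_ofHom (f : x ⟶ y) : toHom (ofHom f) = f := by
  simp [toHom, ofHom, OpticRep.toHom, unitors_equal]

theorem ofHom_toHom (q : Optic x (𝟙_ C) y (𝟙_ C)) : ofHom (toHom q) = q :=
  Quot.ind (β := fun q => ofHom (toHom q) = q) (fun A => Quot.sound (OpticRep.rel_toHom A)) q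

end Optic

/-- The map `f ↦ ⟨f ≫ (λ_ y).inv, (λ_ 𝟙).hom | 𝟙⟩` is a bijection from `x ⟶ y` to
`Optic((x,𝟙),(y,𝟙))`; its inverse is well defined on the quotient and sends
`⟨α, β | m⟩` to `α ≫ (((ρ_ m).inv ≫ β) ⊗ 𝟙 y) ≫ (λ_ y).hom`.
In particular `R` is fully faithful. -/
theorem R_fully_faithful (x y : C) :
    ∃ g : Optic x (𝟙_ C) y (𝟙_ C) → (x ⟶ y),
      (∀ (m : C) (α : x ⟶ m ⊗ y) (β : m ⊗ 𝟙_ C ⟶ 𝟙_ C),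
        g (Quot.mk (OpticRel x (𝟙_ C) y (𝟙_ C)) ⟨m, α, β⟩) =
          α ≫ (((ρ_ m).inv ≫ β) ⊗ₘ 𝟙 y) ≫ (λ_ y).hom) ∧
      Function.LeftInverse g
        (fun f : x ⟶ y =>
          Quot.mk (OpticRel x (𝟙_ C) y (𝟙_ C)) ⟨𝟙_ C, f ≫ (λ_ y).inv, (λ_ (𝟙_ C)).hom⟩) ∧
      Function.RightInverse g
        (fun f : x ⟶ y =>
          Quot.mk (OpticRel x (𝟙_ C) y (𝟙_ C)) ⟨𝟙_ C, f ≫ (λ_ y).inv, (λ_ (𝟙_ C)).hom⟩) :=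
  ⟨Optic.toHom, fun _ _ _ => rfl, Optic.toHom_ofHom, Optic.ofHom_toHom⟩
end

section
/- Let C be a monoidal category and a, b, m, x objects of C. Consider the quotient of the sigma type Σ (n : C), (a ⟶ n ⊗ x) × (n ⟶ b ⊗ m) by the equivalence relation generated by: for every f : n' ⟶ n, p : a ⟶ n' ⊗ x and q : n ⟶ b ⊗ m, the triple (n, p ≫ (f ⊗ 𝟙 x), q) is related to (n', p, f ≫ q). Then the map sending the class of (n, p, q) to p ≫ (q ⊗ 𝟙 x) is a well-defined bijection onto the hom-set (a ⟶ (b ⊗ m) ⊗ x), with inverse sending h : a ⟶ (b ⊗ m) ⊗ x to the class of (b ⊗ m, h, 𝟙 (b ⊗ m)). (Pointwise, this is the isomorphism of profunctors R_x ⊗ R_m ≅ R_{m ⊗ x}.) -/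
open CategoryTheory MonoidalCategory

variable {C : Type*} [Category C] [MonoidalCategory C]

/-- Representatives of the profunctor composite `(R_x ⊗ R_m)(a, b)`. -/
def RCompRep (a b m x : C) : Type _ :=
  Σ n : C, (a ⟶ n ⊗ x) × (n ⟶ b ⊗ m)

/-- The coend relation: for `f : n' ⟶ n`, `p : a ⟶ n' ⊗ x`, `q : n ⟶ b ⊗ m`,
`(n, p ≫ (f ⊗ 𝟙 x), q)` is related to `(n', p, f ≫ q)`. -/
def RCompRel (a b m x : C) : RCompRep a b m x → RCompRep a b m x → Prop :=
  fun A B => ∃ f : B.1 ⟶ A.1,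
    A.2.1 = B.2.1 ≫ (f ⊗ₘ 𝟙 x) ∧ B.2.2 = f ≫ A.2.2

/-! The coend is represented by its component at `n = b ⊗ m`: every triple `(n, p, q)` is
related, through `f := q`, to `(b ⊗ m, p ≫ (q ⊗ 𝟙 x), 𝟙)`, and composing `p` with `q ⊗ 𝟙 x` is
invariant under the relation by functoriality of `- ⊗ x`. -/

namespace RCompRep

variable {a b m x : C}

def toHom (A : RCompRep a b m x) : a ⟶ (b ⊗ m) ⊗ x :=
  A.2.1 ≫ (A.2.2 ⊗ₘ 𝟙 x)

def ofHom (h : a ⟶ (b ⊗ m) ⊗ x) : RCompRep a b m x :=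
  ⟨b ⊗ m, h, 𝟙 (b ⊗ m)⟩

theorem toHom_eq_of_rel {A B : RCompRep a b m x} (h : RCompRel a b m x A B) :
    A.toHom = B.toHom := by
  obtain ⟨f, hp, hq⟩ := h
  rw [toHom, toHom, hp, hq, Category.assoc, ← comp_tensor_id]

theorem toHom_ofHom (h : a ⟶ (b ⊗ m) ⊗ x) : (ofHom h).toHom = h := by
  rw [toHom, ofHom, id_tensorHom_id, Category.comp_id]

theorem rel_ofHom_toHom (A : RCompRep a b m x) : RCompRel a b m x (ofHom A.toHom) A :=
  ⟨A.2.2, rfl, (Category.comp_id _).symm⟩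

end RCompRep

/-- Pointwise, the isomorphism of profunctors `R_x ⊗ R_m ≅ R_{m ⊗ x}`:
the class of `(n, p, q)` is sent to `p ≫ (q ⊗ 𝟙 x) : a ⟶ (b ⊗ m) ⊗ x`, a well-defined
bijection with inverse `h ↦ class of (b ⊗ m, h, 𝟙 (b ⊗ m))`. -/
theorem R_comp_iso (a b m x : C) :
    ∃ g : Quot (RCompRel a b m x) → (a ⟶ (b ⊗ m) ⊗ x),
      (∀ (n : C) (p : a ⟶ n ⊗ x) (q : n ⟶ b ⊗ m),
        g (Quot.mk (RCompRel a b m x) ⟨n, p, q⟩) = p ≫ (q ⊗ₘ 𝟙 x)) ∧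
      Function.LeftInverse
        (fun h : a ⟶ (b ⊗ m) ⊗ x => Quot.mk (RCompRel a b m x) ⟨b ⊗ m, h, 𝟙 (b ⊗ m)⟩) g ∧
      Function.RightInverse
        (fun h : a ⟶ (b ⊗ m) ⊗ x => Quot.mk (RCompRel a b m x) ⟨b ⊗ m, h, 𝟙 (b ⊗ m)⟩) g := by
  refine ⟨Quot.lift RCompRep.toHom fun _ _ => RCompRep.toHom_eq_of_rel, fun _ _ _ => rfl, ?_,
    RCompRep.toHom_ofHom⟩
  rintro ⟨A⟩
  exact Quot.sound (RCompRep.rel_ofHom_toHom A)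
end

section
/- Let C be a monoidal category acting on itself by the tensor product. The optic composition formula sending representatives (m, α, β) of Optic((x,u),(y,v)) and (n, α', β') of Optic((y,v),(z,w)) to the representative (m ⊗ n, α ≫ (𝟙 m ⊗ α') ≫ (α_{m,n,z}).inv, (α_{m,n,w}).hom ≫ (𝟙 m ⊗ β') ≫ β) descends to a well-defined map on the coend quotients (independent of the choice of representatives in both arguments); this composition is associative, and the classes ⟨(λ_x).inv, (λ_u).hom | 𝟙⟩ are two-sided identities for it. Hence pairs of objects of C with hom-sets Optic((x,u),(y,v)) form a category. -/
open CategoryTheory MonoidalCategory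

variable {C : Type*} [Category C] [MonoidalCategory C]

/-!
Composing two optics tensors their residuals. Each law holds on representatives up to the coend
relation, witnessed by a structural isomorphism: for well-definedness the witness `f` is tensored
with the other residual (associator naturality and the interchange law do the rest), and for the
unit and associativity laws the witnesses are `λ⁻¹`, `ρ⁻¹` and the associator, the remaining
equations being instances of monoidal coherence.
-/

namespace OpticRep

variable {x u y v z w : C}

def comp (A : OpticRep x u y v) (B : OpticRep y v z w) : OpticRep x u z w :=
  ⟨A.1 ⊗ B.1, A.2.1 ≫ (𝟙 A.1 ⊗ₘ B.2.1) ≫ (α_ A.1 B.1 z).inv,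
    (α_ A.1 B.1 w).hom ≫ (𝟙 A.1 ⊗ₘ B.2.2) ≫ A.2.2⟩

variable (x u) in
def id : OpticRep x u x u :=
  ⟨𝟙_ C, (λ_ x).inv, (λ_ u).hom⟩

end OpticRep

namespace OpticRel

variable {x u y v z w p q : C}

theorem comp_left {A B : OpticRep x u y v} (h : OpticRel x u y v A B) (R : OpticRep y v z w) :
    OpticRel x u z w (A.comp R) (B.comp R) := by
  obtain ⟨f, hα, hβ⟩ := h
  refine ⟨f ⊗ₘ 𝟙 R.1, ?_, ?_⟩
  · simp only [OpticRep.comp, hα, Category.assoc, tensorHom_id, id_tensorHom]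
    rw [← associator_inv_naturality_left, ← whisker_exchange_assoc]
  · simp only [OpticRep.comp, hβ, tensorHom_id, id_tensorHom]
    rw [associator_naturality_left_assoc, whisker_exchange_assoc]

theorem comp_right (L : OpticRep x u y v) {A B : OpticRep y v z w} (h : OpticRel y v z w A B) :
    OpticRel x u z w (L.comp A) (L.comp B) := by
  obtain ⟨f, hα, hβ⟩ := h
  refine ⟨𝟙 L.1 ⊗ₘ f, ?_, ?_⟩
  · simp only [OpticRep.comp, hα, Category.assoc, tensorHom_id, id_tensorHom]
    rw [← associator_inv_naturality_middle, whiskerLeft_comp_assoc]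
  · simp only [OpticRep.comp, hβ, tensorHom_id, id_tensorHom]
    rw [associator_naturality_middle_assoc, whiskerLeft_comp_assoc]

theorem id_comp (A : OpticRep x u y v) : OpticRel x u y v ((OpticRep.id x u).comp A) A :=
  ⟨(λ_ A.1).inv, by simp [OpticRep.comp, OpticRep.id], by simp [OpticRep.comp, OpticRep.id]⟩

theorem comp_id (A : OpticRep x u y v) : OpticRel x u y v (A.comp (OpticRep.id y v)) A :=
  ⟨(ρ_ A.1).inv, by simp [OpticRep.comp, OpticRep.id], by simp [OpticRep.comp, OpticRep.id]⟩

theorem assoc (A : OpticRep x u y v) (B : OpticRep y v z w) (D : OpticRep z w p q) :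
    OpticRel x u p q (A.comp (B.comp D)) ((A.comp B).comp D) :=
  ⟨(α_ A.1 B.1 D.1).hom, by simp [OpticRep.comp], by simp [OpticRep.comp]⟩

end OpticRel

namespace Optic

def comp (x u y v z w : C) : Optic x u y v → Optic y v z w → Optic x u z w :=
  Quot.map₂ OpticRep.comp (fun L _ _ h => h.comp_right L) (fun _ _ R h => h.comp_left R)

theorem id_comp (x u y v : C) (l : Optic x u y v) :
    comp x u x u y v (Quot.mk _ (OpticRep.id x u)) l = l := by
  induction l using Quot.ind
  exact Quot.sound (OpticRel.id_comp _)

theorem comp_id (x u y v : C) (l : Optic x u y v) :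
    comp x u y v y v l (Quot.mk _ (OpticRep.id y v)) = l := by
  induction l using Quot.ind
  exact Quot.sound (OpticRel.comp_id _)

theorem assoc (x u y v z w p q : C)
    (l₁ : Optic x u y v) (l₂ : Optic y v z w) (l₃ : Optic z w p q) :
    comp x u y v p q l₁ (comp y v z w p q l₂ l₃) = comp x u z w p q (comp x u y v z w l₁ l₂) l₃ := by
  induction l₁ using Quot.ind
  induction l₂ using Quot.ind
  induction l₃ using Quot.ind
  exact Quot.sound (OpticRel.assoc _ _ _)

end Optic

/-- The optic composition formula descends to a well-defined map on the coend quotients,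
is associative, and has the classes `⟨(λ_ x).inv, (λ_ u).hom | 𝟙⟩` as two-sided
identities: optics form a category. -/
theorem optic_category (C : Type*) [Category C] [MonoidalCategory C] :
    ∃ comp : ∀ (x u y v z w : C), Optic x u y v → Optic y v z w → Optic x u z w,
      (∀ (x u y v z w : C) (m : C) (α : x ⟶ m ⊗ y) (β : m ⊗ v ⟶ u)
          (n : C) (α' : y ⟶ n ⊗ z) (β' : n ⊗ w ⟶ v),
        comp x u y v z w (Quot.mk (OpticRel x u y v) ⟨m, α, β⟩)
            (Quot.mk (OpticRel y v z w) ⟨n, α', β'⟩) =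
          Quot.mk (OpticRel x u z w)
            ⟨m ⊗ n, α ≫ (𝟙 m ⊗ₘ α') ≫ (α_ m n z).inv,
              (α_ m n w).hom ≫ (𝟙 m ⊗ₘ β') ≫ β⟩) ∧
      (∀ (x u y v : C) (l : Optic x u y v),
        comp x u x u y v (Quot.mk (OpticRel x u x u) ⟨𝟙_ C, (λ_ x).inv, (λ_ u).hom⟩) l = l) ∧
      (∀ (x u y v : C) (l : Optic x u y v),
        comp x u y v y v l (Quot.mk (OpticRel y v y v) ⟨𝟙_ C, (λ_ y).inv, (λ_ v).hom⟩) = l) ∧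
      (∀ (x u y v z w p q : C)
          (l₁ : Optic x u y v) (l₂ : Optic y v z w) (l₃ : Optic z w p q),
        comp x u y v p q l₁ (comp y v z w p q l₂ l₃) =
          comp x u z w p q (comp x u y v z w l₁ l₂) l₃) :=
  ⟨Optic.comp, fun _ _ _ _ _ _ _ _ _ _ _ _ => rfl, Optic.id_comp, Optic.comp_id, Optic.assoc⟩
end

section
/- Let C be a monoidal category acting on itself by the tensor product, and let x, u, y, v, m be objects with α : x ⟶ m ⊗ y and β : m ⊗ v ⟶ u. Then in Optic((x,u),(y,v)) one has the equality ⟨α ≫ (λ_{m ⊗ y}).inv, (λ_{m ⊗ v}).hom ≫ β | 𝟙⟩ ≫ ⟨𝟙 (m ⊗ y), 𝟙 (m ⊗ v) | m⟩ = ⟨α, β | m⟩, where the first factor lies in Optic((x,u),(m ⊗ y, m ⊗ v)), the second in Optic((m ⊗ y, m ⊗ v),(y,v)), and ≫ denotes optic composition. That is, every optic is the composite of an adapter with a cap optic. -/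
open CategoryTheory MonoidalCategory

variable {C : Type*} [Category C] [MonoidalCategory C]

/-- Optic composition on representatives:
`⟨α, β | m⟩ ≫ ⟨α', β' | n⟩ :=
⟨α ≫ (𝟙 m ⊗ α') ≫ (α_ m n z).inv, (α_ m n w).hom ≫ (𝟙 m ⊗ β') ≫ β | m ⊗ n⟩`. -/
def opticCompRep {x u y v z w : C} (A : OpticRep x u y v) (B : OpticRep y v z w) :
    OpticRep x u z w :=
  ⟨A.1 ⊗ B.1, A.2.1 ≫ (𝟙 A.1 ⊗ₘ B.2.1) ≫ (α_ A.1 B.1 z).inv,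
    (α_ A.1 B.1 w).hom ≫ (𝟙 A.1 ⊗ₘ B.2.2) ≫ A.2.2⟩

theorem quot_mk_opticRel_reindex {x u y v m n : C} (f : n ⟶ m) (α : x ⟶ n ⊗ y)
    (β : m ⊗ v ⟶ u) :
    Quot.mk (OpticRel x u y v) ⟨m, α ≫ (f ⊗ₘ 𝟙 y), β⟩ =
      Quot.mk (OpticRel x u y v) ⟨n, α, (f ⊗ₘ 𝟙 v) ≫ β⟩ :=
  Quot.sound ⟨f, rfl, rfl⟩

theorem opticCompRep_leftUnitor_cap {x u y v m : C} (α : x ⟶ m ⊗ y) (β : m ⊗ v ⟶ u) :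
    opticCompRep
        (⟨𝟙_ C, α ≫ (λ_ (m ⊗ y)).inv, (λ_ (m ⊗ v)).hom ≫ β⟩ :
          OpticRep x u (m ⊗ y) (m ⊗ v))
        (⟨m, 𝟙 (m ⊗ y), 𝟙 (m ⊗ v)⟩ : OpticRep (m ⊗ y) (m ⊗ v) y v) =
      ⟨𝟙_ C ⊗ m, α ≫ ((λ_ m).inv ⊗ₘ 𝟙 y), ((λ_ m).hom ⊗ₘ 𝟙 v) ≫ β⟩ := by
  simp only [opticCompRep, tensorHom_id, leftUnitor_tensor_inv,
    leftUnitor_tensor_hom, id_whiskerRight, Category.id_comp, Category.assoc, Iso.hom_inv_id_assoc,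
    Iso.hom_inv_id, Category.comp_id]
  rfl

/-- Every optic `⟨α, β | m⟩` is the composite of the adapter
`⟨α ≫ (λ_{m ⊗ y}).inv, (λ_{m ⊗ v}).hom ≫ β | 𝟙⟩` with the cap optic
`⟨𝟙 (m ⊗ y), 𝟙 (m ⊗ v) | m⟩`. -/
theorem optic_representation (x u y v m : C) (α : x ⟶ m ⊗ y) (β : m ⊗ v ⟶ u) :
    Quot.mk (OpticRel x u y v)
      (opticCompRep
        (⟨𝟙_ C, α ≫ (λ_ (m ⊗ y)).inv, (λ_ (m ⊗ v)).hom ≫ β⟩ :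
          OpticRep x u (m ⊗ y) (m ⊗ v))
        (⟨m, 𝟙 (m ⊗ y), 𝟙 (m ⊗ v)⟩ : OpticRep (m ⊗ y) (m ⊗ v) y v)) =
    Quot.mk (OpticRel x u y v) ⟨m, α, β⟩ := by
  rw [opticCompRep_leftUnitor_cap, quot_mk_opticRel_reindex]
  simp only [tensorHom_id, inv_hom_whiskerRight_assoc]
end

section
/- Let C be a category with finite products, x, m, y objects of C, and α : x ⟶ m ⨯ y, β : m ⨯ y ⟶ x morphisms with α ≫ β = 𝟙 x and β ≫ α = 𝟙 (m ⨯ y). Define get := α ≫ prod.snd : x ⟶ y and put := prod.lift (prod.fst ≫ α ≫ prod.fst) prod.snd ≫ β : x ⨯ y ⟶ x. Then the lens (get, put) is lawful, i.e. it satisfies: (GetPut) prod.lift (𝟙 x) get ≫ put = 𝟙 x; (PutGet) put ≫ get = prod.snd; (PutPut) prod.map put (𝟙 y) ≫ put = prod.map prod.fst (𝟙 y) ≫ put as morphisms (x ⨯ y) ⨯ y ⟶ x. -/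
/-!
The lens `(prod.snd, prod.map prod.fst (𝟙 y))` on `m ⨯ y` is lawful, and lawfulness is
transported along isomorphisms. The lens of the theorem is the transport of this product lens
along `α : x ≅ m ⨯ y`.
-/

open CategoryTheory CategoryTheory.Limits

namespace CategoryTheory.Limits

variable {C : Type*} [Category C] [HasBinaryProducts C]

structure IsLawfulLens {x y : C} (get : x ⟶ y) (put : x ⨯ y ⟶ x) : Prop where
  getPut : prod.lift (𝟙 x) get ≫ put = 𝟙 x
  putGet : put ≫ get = prod.snd
  putPut : prod.map put (𝟙 y) ≫ put = prod.map prod.fst (𝟙 y) ≫ put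

theorem isLawfulLens_prod_snd (m y : C) :
    IsLawfulLens (prod.snd : m ⨯ y ⟶ y) (prod.map prod.fst (𝟙 y)) where
  getPut := by ext <;> simp
  putGet := by simp
  putPut := by simp

theorem IsLawfulLens.conj {x x₀ y : C} {get : x₀ ⟶ y} {put : x₀ ⨯ y ⟶ x₀}
    (h : IsLawfulLens get put) (e : x ≅ x₀) :
    IsLawfulLens (e.hom ≫ get) (prod.map e.hom (𝟙 y) ≫ put ≫ e.inv) where
  getPut := by
    have hlift : prod.lift (𝟙 x) (e.hom ≫ get) ≫ prod.map e.hom (𝟙 y) =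
        e.hom ≫ prod.lift (𝟙 x₀) get := by
      ext <;> simp
    rw [reassoc_of% hlift, reassoc_of% h.getPut, e.hom_inv_id]
  putGet := by simp [h.putGet]
  putPut := by
    have hmap : prod.map (prod.map e.hom (𝟙 y) ≫ put ≫ e.inv) (𝟙 y) ≫ prod.map e.hom (𝟙 y) =
        prod.map (prod.map e.hom (𝟙 y)) (𝟙 y) ≫ prod.map put (𝟙 y) := by
      simp only [prod.map_map, Category.assoc, e.inv_hom_id, Category.comp_id]
    rw [reassoc_of% hmap, reassoc_of% h.putPut, prod.map_map_assoc, prod.map_map_assoc,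
      prod.map_fst]

end CategoryTheory.Limits

/-- If `α : x ⟶ m ⨯ y` and `β : m ⨯ y ⟶ x` are mutually inverse, then the lens with
`get := α ≫ prod.snd` and `put := prod.lift (prod.fst ≫ α ≫ prod.fst) prod.snd ≫ β`
is lawful: it satisfies GetPut, PutGet and PutPut. -/
theorem iso_lens_lawful {C : Type*} [Category C] [HasFiniteProducts C]
    (x m y : C) (α : x ⟶ m ⨯ y) (β : m ⨯ y ⟶ x)
    (h1 : α ≫ β = 𝟙 x) (h2 : β ≫ α = 𝟙 (m ⨯ y)) :
    -- GetPut
    (prod.lift (𝟙 x) (α ≫ prod.snd) ≫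
        (prod.lift (prod.fst ≫ α ≫ prod.fst) prod.snd ≫ β) = 𝟙 x) ∧
    -- PutGet
    ((prod.lift (prod.fst ≫ α ≫ prod.fst) prod.snd ≫ β) ≫ (α ≫ prod.snd) =
        prod.snd) ∧
    -- PutPut
    (prod.map (prod.lift (prod.fst ≫ α ≫ prod.fst) prod.snd ≫ β) (𝟙 y) ≫
        (prod.lift (prod.fst ≫ α ≫ prod.fst) prod.snd ≫ β) =
      prod.map prod.fst (𝟙 y) ≫
        (prod.lift (prod.fst ≫ α ≫ prod.fst) prod.snd ≫ β)) := by
  have hput : prod.lift (prod.fst ≫ α ≫ prod.fst) prod.snd ≫ β =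
      prod.map α (𝟙 y) ≫ prod.map prod.fst (𝟙 y) ≫ β := by
    rw [prod.map_map_assoc, Category.comp_id, ← prod.lift_fst_comp_snd_comp, Category.comp_id]
  obtain ⟨getPut, putGet, putPut⟩ := (isLawfulLens_prod_snd m y).conj ⟨α, β, h1, h2⟩
  rw [hput]
  exact ⟨getPut, putGet, putPut⟩
end

section
/- Let X Y : Type u, get : X → Y and put : X → Y → X. Then the three lens laws hold — put x (get x) = x for all x, get (put x y) = y for all x y, and put (put x y) y' = put x y' for all x y y' — if and only if the map c : X → Store X, c x := (get x, fun y => put x y), is a coalgebra for the store comonad, i.e. extract (c x) = x for all x and duplicate (c x) = Store.map c (c x) for all x. (Lawful lenses are exactly the coalgebras of the store comonad.) -/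
universe u

/-- The store functor `Store Y A := Y × (Y → A)`. -/
def Store (Y A : Type u) : Type u := Y × (Y → A)

/-- Functorial action of the store functor. -/
def Store.map {Y A B : Type u} (f : A → B) : Store Y A → Store Y B :=
  fun s => (s.1, f ∘ s.2)

/-- Counit (extract) of the store comonad. -/
def Store.extract {Y A : Type u} : Store Y A → A :=
  fun s => s.2 s.1

/-- Comultiplication (duplicate) of the store comonad. -/
def Store.duplicate {Y A : Type u} : Store Y A → Store Y (Store Y A) :=
  fun s => (s.1, fun y' => (y', s.2))

/-- Lawful lenses are exactly the coalgebras of the store comonad: `(get, put)` satisfies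
the three lens laws iff `c x := (get x, fun y => put x y)` is a store-comonad coalgebra. -/
theorem lawful_lens_iff_store_coalgebra {X Y : Type u}
    (get : X → Y) (put : X → Y → X) :
    ((∀ x, put x (get x) = x) ∧
     (∀ x y, get (put x y) = y) ∧
     (∀ x y y', put (put x y) y' = put x y')) ↔
    ((∀ x, Store.extract ((get x, fun y => put x y) : Store Y X) = x) ∧
     (∀ x, Store.duplicate ((get x, fun y => put x y) : Store Y X) =
        Store.map (fun x' => ((get x', fun y => put x' y) : Store Y X))
          ((get x, fun y => put x y) : Store Y X))) := by
  constructor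
  · rintro ⟨h1, h2, h3⟩
    refine ⟨fun x => h1 x, fun x => ?_⟩
    simp only [Store.duplicate, Store.map, Function.comp]
    refine Prod.ext rfl ?_
    funext y
    refine Prod.ext ?_ ?_
    · exact (h2 x y).symm
    · funext y'
      exact (h3 x y y').symm
  · rintro ⟨h1, h2⟩
    refine ⟨fun x => h1 x, fun x y => ?_, fun x y y' => ?_⟩
    · have := congrArg (fun s => (s.2 y).1) (h2 x)
      simpa [Store.duplicate, Store.map, Function.comp] using this.symm
    · have := congrArg (fun s => (s.2 y).2 y') (h2 x)
      simpa [Store.duplicate, Store.map, Function.comp] using this.symm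
end

section
/- Let m be a monad on Type u whose Monad instance satisfies LawfulMonad, and let x u y v z w : Type u. Given monadic lenses (get : x → y, put : x × v → m u) from (x,u) to (y,v) and (get' : y → z, put' : y × w → m v) from (y,v) to (z,w), the composite of their associated optics in MOptic((x,u),(z,w)) equals the associated optic of the monadic lens (get' ∘ get, fun p => put' (get p.1, p.2) >>= fun v' => put (p.1, v')). In particular, the composite of two monadic lenses with pure forward part is again a monadic lens with pure forward part. -/
universe u

/-- Representatives of monadic optics. -/
def MOpticRep (m : Type u → Type u) (x u' y v : Type u) : Type (u + 1) :=
  Σ c : Type u, (x → m (c × y)) × (c × v → m u')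

/-- The coend relation: for `f : c' → c`, `α : x → m (c' × y)`, `β : c × v → m u'`,
`(c, fun a => (fun q => (f q.1, q.2)) <$> α a, β)` is related to
`(c', α, fun p => β (f p.1, p.2))`. -/
def MOpticRel (m : Type u → Type u) [Monad m] (x u' y v : Type u) :
    MOpticRep m x u' y v → MOpticRep m x u' y v → Prop :=
  fun A B => ∃ f : B.1 → A.1,
    A.2.1 = (fun a => (fun q => (f q.1, q.2)) <$> B.2.1 a) ∧
    B.2.2 = fun p => A.2.2 (f p.1, p.2)

/-- Monadic optic composition on representatives. -/
def mopticCompRep {m : Type u → Type u} [Monad m] {x u' y v z w : Type u}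
    (A : MOpticRep m x u' y v) (B : MOpticRep m y v z w) : MOpticRep m x u' z w :=
  ⟨A.1 × B.1,
    fun a => A.2.1 a >>= fun q => (fun r => ((q.1, r.1), r.2)) <$> B.2.1 q.2,
    fun p => B.2.2 (p.1.2, p.2) >>= fun v' => A.2.2 (p.1.1, v')⟩

/-- The optic associated to a monadic lens `(get, put)`. -/
def mlensRep {m : Type u → Type u} [Monad m] {x u' y v : Type u}
    (get : x → y) (put : x × v → m u') : MOpticRep m x u' y v :=
  ⟨x, fun a => pure (a, get a), put⟩

/-- The composite of the optics associated to two monadic lenses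
`(get, put)` and `(get', put')` is the optic associated to the monadic lens
`(get' ∘ get, fun p => put' (get p.1, p.2) >>= fun v' => put (p.1, v'))`:
monadic lenses with pure forward part are closed under composition. -/
theorem mlens_comp {m : Type u → Type u} [Monad m] [LawfulMonad m]
    {x u' y v z w : Type u}
    (get : x → y) (put : x × v → m u') (get' : y → z) (put' : y × w → m v) :
    Quot.mk (MOpticRel m x u' z w)
        (mopticCompRep (mlensRep get put) (mlensRep get' put')) =
      Quot.mk (MOpticRel m x u' z w)
        (mlensRep (get' ∘ get)
          (fun p => put' (get p.1, p.2) >>= fun v' => put (p.1, v'))) := by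
  apply Quot.sound
  refine ⟨fun a => (a, get a), ?_, ?_⟩
  · funext a
    simp [mopticCompRep, mlensRep]
  · funext p
    rfl
end

section
/- Let C be a category with finite products and x u y v z w objects of C. Given lenses in normal form (get : x ⟶ y, put : x ⨯ v ⟶ u) and (get' : y ⟶ z, put' : y ⨯ w ⟶ v), the composite of their classes in the lens coend, ⟨prod.lift (𝟙 x) get, put | x⟩ ≫ ⟨prod.lift (𝟙 y) get', put' | y⟩, equals ⟨prod.lift (𝟙 x) (get ≫ get'), prod.lift prod.fst (prod.lift (prod.fst ≫ get) prod.snd ≫ put') ≫ put | x⟩ in Lens((x,u),(z,w)); that is, lens composition in get/put form is given by get'' = get ≫ get' and put''(a, w) = put(a, put'(get a, w)). -/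
open CategoryTheory CategoryTheory.Limits

variable {C : Type*} [Category C] [HasFiniteProducts C]

/-- Lens composition on representatives:
`⟨α, β | c⟩ ≫ ⟨α', β' | d⟩ :=
⟨α ≫ prod.map (𝟙 c) α' ≫ (prod.associator c d z).inv,
 (prod.associator c d w).hom ≫ prod.map (𝟙 c) β' ≫ β | c ⨯ d⟩`. -/
noncomputable def lensCompRep {x u y v z w : C} (A : LensRep x u y v) (B : LensRep y v z w) :
    LensRep x u z w :=
  ⟨A.1 ⨯ B.1,
    A.2.1 ≫ prod.map (𝟙 A.1) B.2.1 ≫ (prod.associator A.1 B.1 z).inv,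
    (prod.associator A.1 B.1 w).hom ≫ prod.map (𝟙 A.1) B.2.2 ≫ A.2.2⟩

/-! The composite has residual `x ⨯ y`, but its residual `y`-component is always `get` of the
`x`-component. The coend relation along `prod.lift (𝟙 x) get : x ⟶ x ⨯ y` therefore identifies
it with a lens of residual `x`, whose forward and backward parts are the claimed ones. -/

-- On explicit triples, so that the `prod` lemmas can rewrite the two conditions: in `LensRel`
-- itself the products are formed at the projections `B.1`, which do not reduce reducibly.
lemma lensRel_mk {x u y v c n : C} (f : n ⟶ c) {α : x ⟶ c ⨯ y} {α' : x ⟶ n ⨯ y}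
    {β : c ⨯ v ⟶ u} {β' : n ⨯ v ⟶ u} (hα : α = α' ≫ prod.map f (𝟙 y))
    (hβ : β' = prod.map f (𝟙 v) ≫ β) :
    LensRel x u y v ⟨c, α, β⟩ ⟨n, α', β'⟩ :=
  ⟨f, hα, hβ⟩

lemma comp_prod_map_lift_associator_inv {x c y z : C} (α : x ⟶ c ⨯ y) (g : y ⟶ z) :
    α ≫ prod.map (𝟙 c) (prod.lift (𝟙 y) g) ≫ (prod.associator c y z).inv =
      prod.lift α (α ≫ prod.snd ≫ g) := by
  ext <;> simp [prod.lift_fst, prod.lift_snd]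

lemma prod_map_lift_associator_hom {x y w : C} (g : x ⟶ y) :
    prod.map (prod.lift (𝟙 x) g) (𝟙 w) ≫ (prod.associator x y w).hom =
      prod.lift prod.fst (prod.lift (prod.fst ≫ g) prod.snd) := by
  ext <;> simp [prod.lift_fst, prod.lift_snd]

/-- Lens composition in get/put normal form: `get'' = get ≫ get'` and
`put''(a, w) = put(a, put'(get a, w))`. -/
theorem lens_comp_get_put (x u y v z w : C)
    (get : x ⟶ y) (put : x ⨯ v ⟶ u) (get' : y ⟶ z) (put' : y ⨯ w ⟶ v) :
    Quot.mk (LensRel x u z w)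
        (lensCompRep (⟨x, prod.lift (𝟙 x) get, put⟩ : LensRep x u y v)
          (⟨y, prod.lift (𝟙 y) get', put'⟩ : LensRep y v z w)) =
      Quot.mk (LensRel x u z w)
        ⟨x, prod.lift (𝟙 x) (get ≫ get'),
          prod.lift prod.fst (prod.lift (prod.fst ≫ get) prod.snd ≫ put') ≫ put⟩ := by
  refine Quot.sound (lensRel_mk (prod.lift (𝟙 x) get) ?_ ?_)
  · dsimp only [lensCompRep]
    rw [comp_prod_map_lift_associator_inv, prod.lift_map, prod.lift_snd_assoc, Category.id_comp,
      Category.comp_id]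
  · dsimp only [lensCompRep]
    rw [← Category.assoc, prod_map_lift_associator_hom, prod.lift_map_assoc, Category.comp_id]
end
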